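/- arXiv:2511.11642 — 3 statements merged into one kernel-verified Lean document; each statement's English description precedes it below -/
import Mathlib

section
/- G_FL is, up to isomorphism, the unique game G = (T, A) such that: T and A are at most countable; every finite game admits a game embedding into G; and G is ultrahomogeneous with respect to (emb, FinGame). In particular, any game G with these three properties is isomorphic to G_FL, and G_FL itself has them. -/
/-!
`G_FL` has the extension property: an embedding of a subgame `K` of a finite game `K'` extends
to `K'` by giving the new moves labels that are fresh at their position, except that far enough
along a won run (where `K'` has a single continuation) they are labelled `0`, so that exactly
the won runs become eventually zero. A game that is universal and ultrahomogeneous also has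
the extension property: embed `K'` and correct the embedding by an automorphism.

Between two games with countable trees and payoffs that both have the extension property, a
back-and-forth argument extends any finite partial embedding to an isomorphism: one stage adds
a run to the domain, the next, working with the inverse, a run to the image, along enumerations
of the won runs and of runs through all positions. Applied to `G_FL` and itself this gives
ultrahomogeneity, and applied to `G` and `G_FL` uniqueness.
-/

universe u v w x y

namespace FraisseGames

/-- The initial segment (of length `n`) of an infinite sequence `R`. -/
def runPrefix {M : Type u} (R : ℕ → M) (n : ℕ) : List M :=
  (List.range n).map R

/-- `T` is a game tree over `M`: it is closed under initial segments, and every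
moment of `T` has a one-step extension in `T`. -/
def IsGameTree {M : Type u} (T : Set (List M)) : Prop :=
  (∀ t ∈ T, ∀ k : ℕ, t.take k ∈ T) ∧ ∀ t ∈ T, ∃ x : M, t ++ [x] ∈ T

/-- The set of runs of the tree `T`. -/
def Runs {M : Type u} (T : Set (List M)) : Set (ℕ → M) :=
  {R | ∀ n : ℕ, runPrefix R n ∈ T}

/-- A game over `M`: a game tree together with a payoff set of runs. -/
structure Game (M : Type u) : Type u where
  tree : Set (List M)
  isGameTree : IsGameTree tree
  payoff : Set (ℕ → M)
  payoff_subset : payoff ⊆ Runs tree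

/-- A game is finite if its set of runs is finite. -/
def Game.IsFin {M : Type u} (G : Game M) : Prop := (Runs G.tree).Finite

/-- The subgame relation `G ≤ G'`. -/
def Game.Sub {M : Type u} (G G' : Game M) : Prop :=
  G.tree ⊆ G'.tree ∧ G.payoff = G'.payoff ∩ Runs G.tree

/-- `f` is a chronological map from `T₁` to `T₂`: it maps `T₁` into `T₂` and it
preserves lengths and truncations of moments. -/
def Chronological {M₁ : Type u} {M₂ : Type v} (T₁ : Set (List M₁)) (T₂ : Set (List M₂))
    (f : List M₁ → List M₂) : Prop :=
  (∀ t ∈ T₁, f t ∈ T₂) ∧ (∀ t ∈ T₁, (f t).length = t.length) ∧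
    ∀ t ∈ T₁, ∀ k : ℕ, f (t.take k) = (f t).take k

/-- `BarMapsTo f R S` says that the map `f̄` on runs induced by the chronological
map `f` sends the run `R` to the run `S`, i.e. `S↾n = f (R↾n)` for all `n`. -/
def BarMapsTo {M₁ : Type u} {M₂ : Type v} (f : List M₁ → List M₂)
    (R : ℕ → M₁) (S : ℕ → M₂) : Prop :=
  ∀ n : ℕ, runPrefix S n = f (runPrefix R n)

/-- `f` is an A-morphism from `G₁` to `G₂`: a chronological map whose induced map on
runs sends runs won by Ali to runs won by Ali. -/
def IsAMorphism {M₁ : Type u} {M₂ : Type v} (G₁ : Game M₁) (G₂ : Game M₂)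
    (f : List M₁ → List M₂) : Prop :=
  Chronological G₁.tree G₂.tree f ∧
    ∀ R ∈ G₁.payoff, ∀ S : ℕ → M₂, BarMapsTo f R S → S ∈ G₂.payoff

/-- `f` is a game embedding from `G₁` to `G₂`: a chronological map, injective on the
tree, such that for every run `R` of `G₁`, `R ∈ A₁ ↔ f̄ R ∈ A₂`. -/
def IsGameEmbedding {M₁ : Type u} {M₂ : Type v} (G₁ : Game M₁) (G₂ : Game M₂)
    (f : List M₁ → List M₂) : Prop :=
  Chronological G₁.tree G₂.tree f ∧
    (∀ t ∈ G₁.tree, ∀ s ∈ G₁.tree, f t = f s → t = s) ∧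
    ∀ R ∈ Runs G₁.tree, ∀ S : ℕ → M₂, BarMapsTo f R S → (R ∈ G₁.payoff ↔ S ∈ G₂.payoff)

/-- `f` is an isomorphism of games from `G₁` onto `G₂`: a game embedding that is
surjective onto the tree of `G₂`. -/
def IsGameIso {M₁ : Type u} {M₂ : Type v} (G₁ : Game M₁) (G₂ : Game M₂)
    (f : List M₁ → List M₂) : Prop :=
  IsGameEmbedding G₁ G₂ f ∧ ∀ s ∈ G₂.tree, ∃ t ∈ G₁.tree, f t = s

/-- The set of eventually-zero infinite sequences of natural numbers. -/
def c00 : Set (ℕ → ℕ) := {R | ∃ N : ℕ, ∀ n ≥ N, R n = 0}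

/-- The game `G_FL = (ω^{<ω}, c₀₀)`. -/
def GFL : Game ℕ where
  tree := Set.univ
  isGameTree := ⟨fun _ _ _ => trivial, fun _ _ => ⟨0, trivial⟩⟩
  payoff := c00
  payoff_subset := fun _ _ _ => trivial

/-- A game `G` is ultrahomogeneous with respect to `(emb, FinGame)`: any two game
embeddings of a finite game into `G` differ by an automorphism of `G`. -/
def UltrahomFinGames.{u', w'} {N : Type w'} (G : Game N) : Prop :=
  ∀ (M : Type u') (H : Game M), H.IsFin →
    ∀ f g : List M → List N,
      IsGameEmbedding H G f → IsGameEmbedding H G g →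
      ∃ φ : List N → List N, IsGameIso G G φ ∧ ∀ t ∈ H.tree, φ (f t) = g t

open Filter

section Runs

variable {M : Type u} {N : Type v}

theorem runPrefix_length (R : ℕ → M) (n : ℕ) : (runPrefix R n).length = n := by
  simp [runPrefix]

theorem runPrefix_succ (R : ℕ → M) (n : ℕ) : runPrefix R (n + 1) = runPrefix R n ++ [R n] := by
  simp [runPrefix, List.range_succ]

theorem take_runPrefix (R : ℕ → M) (k n : ℕ) : (runPrefix R n).take k = runPrefix R (min k n) := by
  simp [runPrefix, ← List.map_take, List.take_range]

theorem runPrefix_map (F : M → N) (R : ℕ → M) (n : ℕ) :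
    (runPrefix R n).map F = runPrefix (F ∘ R) n := by
  simp [runPrefix]

theorem runPrefix_eq_runPrefix_iff {R S : ℕ → M} {n : ℕ} :
    runPrefix R n = runPrefix S n ↔ ∀ i < n, R i = S i := by
  simp [runPrefix, List.map_inj_left]

theorem eq_of_runPrefix_eq {R S : ℕ → M} (h : ∀ n, runPrefix R n = runPrefix S n) : R = S :=
  funext fun i => runPrefix_eq_runPrefix_iff.mp (h (i + 1)) i (Nat.lt_succ_self i)

theorem eventually_eq_of_runPrefix_eq (R S : ℕ → M) :
    ∀ᶠ n in atTop, runPrefix R n = runPrefix S n → R = S := by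
  by_cases h : R = S
  · exact .of_forall fun _ _ => h
  obtain ⟨i, hi⟩ := Function.ne_iff.mp h
  filter_upwards [eventually_gt_atTop i] with n hn hRS
  exact absurd (runPrefix_eq_runPrefix_iff.mp hRS i hn) hi

theorem eventually_injOn_runPrefix {F : Set (ℕ → M)} (hF : F.Finite) :
    ∀ᶠ n in atTop, F.InjOn (runPrefix · n) := by
  simp only [Set.InjOn, hF.eventually_all]
  exact fun R _ S _ => eventually_eq_of_runPrefix_eq R S

theorem exists_runPrefix_eq (t : ℕ → List M) (hlen : ∀ n, (t n).length = n)
    (hcoh : ∀ n, (t (n + 1)).take n = t n) : ∃ R : ℕ → M, ∀ n, runPrefix R n = t n := by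
  refine ⟨fun i => (t (i + 1))[i]'(by rw [hlen]; omega), fun n => ?_⟩
  induction n with
  | zero => simpa [runPrefix] using (List.length_eq_zero_iff.mp (hlen 0)).symm
  | succ n ih =>
    rw [runPrefix_succ, ih]
    conv_lhs => rw [← hcoh n]
    rw [List.take_append_getElem, List.take_of_length_le (by rw [hlen])]

theorem IsGameTree.exists_run {T : Set (List M)} (hT : IsGameTree T) {t : List M} (ht : t ∈ T) :
    ∃ R ∈ Runs T, runPrefix R t.length = t := by
  choose next hnext using hT.2
  let u : ℕ → T := fun n => Nat.rec ⟨t, ht⟩ (fun _ s => ⟨s.1 ++ [next s.1 s.2], hnext _ s.2⟩) n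
  have hu_succ : ∀ n, (u (n + 1)).1 = (u n).1 ++ [next _ (u n).2] := fun _ => rfl
  have hu_len : ∀ n, (u n).1.length = t.length + n := by
    intro n
    induction n with
    | zero => rfl
    | succ n ih => simp [hu_succ, ih, Nat.add_assoc]
  have hu_take : ∀ n, (u n).1.take t.length = t := by
    intro n
    induction n with
    | zero => exact List.take_length
    | succ n ih => rw [hu_succ, List.take_append_of_le_length (by rw [hu_len]; omega), ih]
  obtain ⟨R, hR⟩ := exists_runPrefix_eq (fun n => (u n).1.take n) (fun n => by simp [hu_len])
    (fun n => by
      rw [List.take_take, min_eq_left (by omega), hu_succ,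
        List.take_append_of_le_length (by rw [hu_len]; omega)])
  refine ⟨R, fun n => ?_, ?_⟩
  · rw [hR]
    exact hT.1 _ (u n).2 n
  · rw [hR, hu_take]

theorem eventually_runPrefix_notMem {T : Set (List M)} (hT : ∀ t ∈ T, ∀ k, t.take k ∈ T)
    {R : ℕ → M} (hR : R ∉ Runs T) : ∀ᶠ n in atTop, runPrefix R n ∉ T := by
  obtain ⟨n₀, hn₀⟩ := not_forall.mp hR
  filter_upwards [eventually_ge_atTop n₀] with n hn h
  exact hn₀ (by simpa [take_runPrefix, min_eq_left hn] using hT _ h n₀)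

theorem Runs.mono {T T' : Set (List M)} (h : T ⊆ T') : Runs T ⊆ Runs T' :=
  fun _ hR n => h (hR n)

end Runs

section PrefixTree

variable {M : Type u}

def prefixTree (F : Set (ℕ → M)) : Set (List M) :=
  {l | ∃ R ∈ F, ∃ n, runPrefix R n = l}

theorem runPrefix_mem_prefixTree {F : Set (ℕ → M)} {R : ℕ → M} (hR : R ∈ F) (n : ℕ) :
    runPrefix R n ∈ prefixTree F :=
  ⟨R, hR, n, rfl⟩

theorem prefixTree_mono {F F' : Set (ℕ → M)} (h : F ⊆ F') : prefixTree F ⊆ prefixTree F' :=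
  fun _ ⟨R, hR, n, hn⟩ => ⟨R, h hR, n, hn⟩

theorem prefixTree_subset {T : Set (List M)} {F : Set (ℕ → M)} (hF : F ⊆ Runs T) :
    prefixTree F ⊆ T := by
  rintro _ ⟨R, hR, n, rfl⟩
  exact hF hR n

theorem subset_runs_prefixTree (F : Set (ℕ → M)) : F ⊆ Runs (prefixTree F) :=
  fun _ hR n => runPrefix_mem_prefixTree hR n

theorem isGameTree_prefixTree (F : Set (ℕ → M)) : IsGameTree (prefixTree F) := by
  refine ⟨?_, ?_⟩
  · rintro _ ⟨R, hR, n, rfl⟩ k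
    rw [take_runPrefix]
    exact runPrefix_mem_prefixTree hR _
  · rintro _ ⟨R, hR, n, rfl⟩
    exact ⟨R n, by rw [← runPrefix_succ]; exact runPrefix_mem_prefixTree hR _⟩

theorem countable_prefixTree {F : Set (ℕ → M)} (hF : F.Countable) :
    (prefixTree F).Countable := by
  refine (hF.biUnion fun R _ => Set.countable_range (runPrefix R)).mono ?_
  rintro _ ⟨R, hR, n, rfl⟩
  exact Set.mem_biUnion hR (Set.mem_range_self n)

theorem IsGameTree.eq_prefixTree_runs {T : Set (List M)} (hT : IsGameTree T) :
    T = prefixTree (Runs T) := by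
  refine Set.Subset.antisymm (fun t ht => ?_) (prefixTree_subset subset_rfl)
  obtain ⟨R, hR, hRt⟩ := hT.exists_run ht
  exact ⟨R, hR, _, hRt⟩

theorem runs_prefixTree {F : Set (ℕ → M)} (hF : F.Finite) : Runs (prefixTree F) = F := by
  refine Set.Subset.antisymm (fun R hR => ?_) (subset_runs_prefixTree F)
  obtain ⟨n, hn⟩ := (eventually_injOn_runPrefix (hF.insert R)).exists
  obtain ⟨S, hS, m, hSR⟩ := hR n
  obtain rfl : m = n := by simpa [runPrefix_length] using congrArg List.length hSR
  rwa [hn (Set.mem_insert_of_mem _ hS) (Set.mem_insert _ _) hSR] at hS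

theorem runPrefix_mem_prefixTree_iff {T : Set (List M)} {F : Set (ℕ → M)} {L n : ℕ}
    (hL : (Runs T).InjOn (runPrefix · L)) (hLn : L ≤ n) (hF : F ⊆ Runs T) {R : ℕ → M}
    (hR : R ∈ Runs T) : runPrefix R n ∈ prefixTree F ↔ R ∈ F := by
  refine ⟨fun ⟨Q, hQ, m, hQR⟩ => ?_, fun h => runPrefix_mem_prefixTree h n⟩
  obtain rfl : m = n := by simpa [runPrefix_length] using congrArg List.length hQR
  have hQR' : runPrefix Q L = runPrefix R L := by
    simpa [take_runPrefix, min_eq_left hLn] using congrArg (List.take L) hQR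
  rwa [← hL (hF hQ) hR hQR']

end PrefixTree

section Subgame

variable {M : Type u} {N : Type v}

def Game.subgame (G : Game M) (F : Set (ℕ → M)) : Game M where
  tree := prefixTree F
  isGameTree := isGameTree_prefixTree F
  payoff := G.payoff ∩ Runs (prefixTree F)
  payoff_subset := Set.inter_subset_right

theorem Game.subgame_isFin (G : Game M) {F : Set (ℕ → M)} (hF : F.Finite) :
    (G.subgame F).IsFin := by
  rw [Game.IsFin, Game.subgame, runs_prefixTree hF]
  exact hF

theorem Game.subgame_sub (G : Game M) {F : Set (ℕ → M)} (hF : F ⊆ Runs G.tree) :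
    (G.subgame F).Sub G :=
  ⟨prefixTree_subset hF, rfl⟩

theorem Game.subgame_sub_subgame (G : Game M) {F F' : Set (ℕ → M)} (h : F ⊆ F') :
    (G.subgame F).Sub (G.subgame F') := by
  refine ⟨prefixTree_mono h, ?_⟩
  simp only [Game.subgame, Set.inter_assoc]
  rw [Set.inter_eq_right.mpr (Runs.mono (prefixTree_mono h))]

theorem Game.Sub.isFin {K K' : Game M} (h : K.Sub K') (hK' : K'.IsFin) : K.IsFin :=
  hK'.subset (Runs.mono h.1)

theorem Game.IsFin.countable_tree {G : Game M} (hG : G.IsFin) : G.tree.Countable := by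
  rw [G.isGameTree.eq_prefixTree_runs]
  exact countable_prefixTree hG.countable

theorem Game.IsFin.finite_moves {G : Game M} (hG : G.IsFin) (a : List M) :
    {x | a ++ [x] ∈ G.tree}.Finite := by
  refine (hG.image (· a.length)).subset fun x hx => ?_
  obtain ⟨R, hR, hRx⟩ := G.isGameTree.exists_run hx
  rw [List.length_append, List.length_singleton, runPrefix_succ] at hRx
  exact ⟨R, hR, by simpa using (List.append_inj' hRx rfl).2⟩

theorem Game.IsFin.exists_bound {G : Game M} (hG : G.IsFin) (ℓ : List M → ℕ) :
    ∃ B : List M → ℕ, ∀ a x, a ++ [x] ∈ G.tree → ℓ (a ++ [x]) < B a := by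
  choose B hB using fun a => ((hG.finite_moves a).image fun x => ℓ (a ++ [x])).bddAbove
  exact ⟨fun a => B a + 1, fun a x hx => Nat.lt_succ_of_le (hB a ⟨x, hx, rfl⟩)⟩

theorem Game.eq_of_append_singleton_mem {G : Game M} {L : ℕ}
    (hL : (Runs G.tree).InjOn (runPrefix · L)) {a : List M} (ha : L ≤ a.length) {x y : M}
    (hx : a ++ [x] ∈ G.tree) (hy : a ++ [y] ∈ G.tree) : x = y := by
  obtain ⟨R, hR, hRx⟩ := G.isGameTree.exists_run hx
  obtain ⟨S, hS, hSy⟩ := G.isGameTree.exists_run hy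
  simp only [List.length_append, List.length_singleton] at hRx hSy
  have hpre : ∀ {Q : ℕ → M} {z : M}, runPrefix Q (a.length + 1) = a ++ [z] →
      runPrefix Q L = a.take L := by
    intro Q z hQ
    have := congrArg (List.take L) hQ
    rwa [take_runPrefix, min_eq_left (by omega), List.take_append_of_le_length ha] at this
  obtain rfl : R = S := hL hR hS ((hpre hRx).trans (hpre hSy).symm)
  simpa using hRx.symm.trans hSy

theorem isGameEmbedding_subgame_empty (G : Game M) (G' : Game N) (f : List M → List N) :
    IsGameEmbedding (G.subgame ∅) G' f := by
  have hempty : ∀ t, t ∉ (G.subgame ∅).tree := fun _ ⟨_, h, _⟩ => h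
  exact ⟨⟨fun t ht => (hempty t ht).elim, fun t ht => (hempty t ht).elim,
    fun t ht => (hempty t ht).elim⟩, fun t ht => (hempty t ht).elim,
    fun R hR => (hempty _ (hR 0)).elim⟩

end Subgame

section Embeddings

variable {M₁ : Type u} {M₂ : Type v} {M₃ : Type w}

theorem Chronological.exists_append_singleton {T₁ : Set (List M₁)} {T₂ : Set (List M₂)}
    {f : List M₁ → List M₂} (hf : Chronological T₁ T₂ f) {t : List M₁} {x : M₁}
    (ht : t ++ [x] ∈ T₁) : ∃ y, f (t ++ [x]) = f t ++ [y] := by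
  have hlen : (f (t ++ [x])).length = t.length + 1 := by simp [hf.2.1 _ ht]
  obtain ⟨y, hy⟩ := List.length_eq_one_iff.mp
    (show ((f (t ++ [x])).drop t.length).length = 1 by simp [hlen])
  refine ⟨y, ?_⟩
  rw [← List.take_append_drop t.length (f (t ++ [x])), hy, ← hf.2.2 _ ht,
    List.take_left' rfl]

theorem Chronological.exists_barMapsTo {T₁ : Set (List M₁)} {T₂ : Set (List M₂)}
    {f : List M₁ → List M₂} (hf : Chronological T₁ T₂ f) {R : ℕ → M₁} (hR : R ∈ Runs T₁) :
    ∃ S, BarMapsTo f R S := by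
  obtain ⟨S, hS⟩ := exists_runPrefix_eq (fun n => f (runPrefix R n))
    (fun n => by rw [hf.2.1 _ (hR n), runPrefix_length])
    (fun n => by rw [← hf.2.2 _ (hR _), take_runPrefix, min_eq_left (by omega)])
  exact ⟨S, hS⟩

theorem Chronological.mem_runs_of_barMapsTo {T₁ : Set (List M₁)} {T₂ : Set (List M₂)}
    {f : List M₁ → List M₂} (hf : Chronological T₁ T₂ f) {R : ℕ → M₁} (hR : R ∈ Runs T₁)
    {S : ℕ → M₂} (hS : BarMapsTo f R S) : S ∈ Runs T₂ :=
  fun n => hS n ▸ hf.1 _ (hR n)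

theorem BarMapsTo.unique {f : List M₁ → List M₂} {R : ℕ → M₁} {S S' : ℕ → M₂}
    (hS : BarMapsTo f R S) (hS' : BarMapsTo f R S') : S = S' :=
  eq_of_runPrefix_eq fun n => (hS n).trans (hS' n).symm

theorem eq_of_barMapsTo {T : Set (List M₁)} {f : List M₁ → List M₂} (hf : T.InjOn f)
    {R R' : ℕ → M₁} (hR : R ∈ Runs T) (hR' : R' ∈ Runs T) {S : ℕ → M₂} (hS : BarMapsTo f R S)
    (hS' : BarMapsTo f R' S) : R = R' :=
  eq_of_runPrefix_eq fun n => hf (hR n) (hR' n) ((hS n).symm.trans (hS' n))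

theorem IsGameEmbedding.comp {G₁ : Game M₁} {G₂ : Game M₂} {G₃ : Game M₃}
    {f : List M₁ → List M₂} {g : List M₂ → List M₃} (hf : IsGameEmbedding G₁ G₂ f)
    (hg : IsGameEmbedding G₂ G₃ g) : IsGameEmbedding G₁ G₃ (g ∘ f) := by
  obtain ⟨hfc, hfi, hfp⟩ := hf
  obtain ⟨hgc, hgi, hgp⟩ := hg
  refine ⟨⟨fun t ht => hgc.1 _ (hfc.1 _ ht),
    fun t ht => (hgc.2.1 _ (hfc.1 _ ht)).trans (hfc.2.1 _ ht),
    fun t ht k => by simp only [Function.comp, hfc.2.2 _ ht, hgc.2.2 _ (hfc.1 _ ht)]⟩,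
    fun t ht s hs h => hfi _ ht _ hs (hgi _ (hfc.1 _ ht) _ (hfc.1 _ hs) h), fun R hR S hS => ?_⟩
  obtain ⟨Q, hQ⟩ := hfc.exists_barMapsTo hR
  exact (hfp R hR Q hQ).trans
    (hgp Q (hfc.mem_runs_of_barMapsTo hR hQ) S fun n => (hS n).trans (congrArg g (hQ n)).symm)

theorem IsGameEmbedding.mono_left {K H : Game M₁} {G : Game M₂} {f : List M₁ → List M₂}
    (hKH : K.Sub H) (hf : IsGameEmbedding H G f) : IsGameEmbedding K G f := by
  obtain ⟨hc, hi, hp⟩ := hf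
  refine ⟨⟨fun t ht => hc.1 _ (hKH.1 ht), fun t ht => hc.2.1 _ (hKH.1 ht),
    fun t ht => hc.2.2 _ (hKH.1 ht)⟩, fun t ht s hs => hi _ (hKH.1 ht) _ (hKH.1 hs),
    fun R hR S hS => ?_⟩
  rw [hKH.2, Set.mem_inter_iff, and_iff_left hR]
  exact hp R (Runs.mono hKH.1 hR) S hS

theorem IsGameEmbedding.mono_right {K : Game M₁} {H G : Game M₂} {f : List M₁ → List M₂}
    (hHG : H.Sub G) (hf : IsGameEmbedding K H f) : IsGameEmbedding K G f := by
  obtain ⟨hc, hi, hp⟩ := hf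
  refine ⟨⟨fun t ht => hHG.1 (hc.1 _ ht), hc.2.1, hc.2.2⟩, hi, fun R hR S hS => ?_⟩
  rw [hp R hR S hS, hHG.2, Set.mem_inter_iff, and_iff_left (hc.mem_runs_of_barMapsTo hR hS)]

def runImage (f : List M₁ → List M₂) (F : Set (ℕ → M₁)) : Set (ℕ → M₂) :=
  {S | ∃ R ∈ F, BarMapsTo f R S}

theorem runImage_finite (f : List M₁ → List M₂) {F : Set (ℕ → M₁)} (hF : F.Finite) :
    (runImage f F).Finite := by
  refine (hF.biUnion fun R _ => Set.Subsingleton.finite (s := {S | BarMapsTo f R S})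
    fun _ hS _ hS' => hS.unique hS').subset fun S ⟨R, hR, hS⟩ => Set.mem_biUnion hR hS

theorem runImage_subset_runs {T₁ : Set (List M₁)} {T₂ : Set (List M₂)} {f : List M₁ → List M₂}
    (hf : Chronological T₁ T₂ f) {F : Set (ℕ → M₁)} (hF : F ⊆ Runs T₁) :
    runImage f F ⊆ Runs T₂ :=
  fun _ ⟨_, hR, hS⟩ => hf.mem_runs_of_barMapsTo (hF hR) hS

theorem prefixTree_runImage {T₂ : Set (List M₂)} {f : List M₁ → List M₂} {F : Set (ℕ → M₁)}
    (hf : Chronological (prefixTree F) T₂ f) : prefixTree (runImage f F) = f '' prefixTree F := by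
  ext s
  constructor
  · rintro ⟨S, ⟨R, hR, hRS⟩, n, rfl⟩
    exact ⟨_, runPrefix_mem_prefixTree hR n, (hRS n).symm⟩
  · rintro ⟨_, ⟨R, hR, n, rfl⟩, rfl⟩
    obtain ⟨S, hS⟩ := hf.exists_barMapsTo (subset_runs_prefixTree F hR)
    exact ⟨S, ⟨R, hR, hS⟩, n, hS n⟩

theorem IsGameEmbedding.exists_inverse {H : Game M₁} {G : Game M₂} {f : List M₁ → List M₂}
    (hf : IsGameEmbedding H G f) :
    ∃ ψ : List M₂ → List M₁, IsGameEmbedding (G.subgame (runImage f (Runs H.tree))) H ψ ∧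
      (∀ t ∈ H.tree, ψ (f t) = t) ∧ ∀ s ∈ prefixTree (runImage f (Runs H.tree)), f (ψ s) = s := by
  obtain ⟨hc, hi, hp⟩ := hf
  have himage : prefixTree (runImage f (Runs H.tree)) = f '' H.tree := by
    rw [prefixTree_runImage (H.isGameTree.eq_prefixTree_runs ▸ hc),
      ← H.isGameTree.eq_prefixTree_runs]
  let ψ := Function.invFunOn f H.tree
  have hψf : ∀ t ∈ H.tree, ψ (f t) = t := (Set.InjOn.leftInvOn_invFunOn hi)
  have hfψ : ∀ s ∈ f '' H.tree, ψ s ∈ H.tree ∧ f (ψ s) = s := fun s hs => Function.invFunOn_pos hs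
  have htree : (G.subgame (runImage f (Runs H.tree))).tree = f '' H.tree := himage
  rw [himage]
  refine ⟨ψ, ⟨⟨fun s hs => (hfψ s (htree ▸ hs)).1, ?_, ?_⟩, ?_, ?_⟩, hψf, fun s hs => (hfψ s hs).2⟩
  · intro s hs
    obtain ⟨t, ht, rfl⟩ := htree ▸ hs
    rw [hψf t ht, hc.2.1 t ht]
  · intro s hs k
    obtain ⟨t, ht, rfl⟩ := htree ▸ hs
    rw [← hc.2.2 t ht, hψf t ht, hψf _ (H.isGameTree.1 t ht k)]
  · intro s hs s' hs' h
    rw [← (hfψ s (htree ▸ hs)).2, h, (hfψ s' (htree ▸ hs')).2]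
  · intro S hS R hR
    have hRS : BarMapsTo f R S := fun n => by rw [hR n, (hfψ _ (htree ▸ hS n)).2]
    have hRruns : R ∈ Runs H.tree := fun n => hR n ▸ (hfψ _ (htree ▸ hS n)).1
    rw [hp R hRruns S hRS]
    exact ⟨fun h => h.1, fun h => ⟨h, hS⟩⟩

end Embeddings

section Transport

variable {M : Type u} {M' : Type v} {N : Type w}

def Game.congr (σ : M ≃ M') (G : Game M) : Game M' where
  tree := List.map σ.symm ⁻¹' G.tree
  isGameTree := ⟨fun t ht k => by simpa [List.map_take] using G.isGameTree.1 _ ht k,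
    fun t ht => let ⟨x, hx⟩ := G.isGameTree.2 _ ht; ⟨σ x, by simpa using hx⟩⟩
  payoff := {R | σ.symm ∘ R ∈ G.payoff}
  payoff_subset := fun R hR n => by
    simpa [Set.mem_preimage, runPrefix_map] using G.payoff_subset hR n

theorem Game.mem_runs_congr {σ : M ≃ M'} {G : Game M} {R : ℕ → M'} :
    R ∈ Runs (G.congr σ).tree ↔ σ.symm ∘ R ∈ Runs G.tree := by
  simp [Runs, Game.congr, runPrefix_map]

theorem Game.IsFin.congr {G : Game M} (hG : G.IsFin) (σ : M ≃ M') : (G.congr σ).IsFin :=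
  (hG.image (σ ∘ ·)).subset fun R hR =>
    ⟨σ.symm ∘ R, Game.mem_runs_congr.mp hR, by simp [← Function.comp_assoc]⟩

theorem Game.Sub.congr {K K' : Game M} (h : K.Sub K') (σ : M ≃ M') :
    (K.congr σ).Sub (K'.congr σ) := by
  refine ⟨Set.preimage_mono h.1, Set.ext fun R => ?_⟩
  change σ.symm ∘ R ∈ K.payoff ↔ σ.symm ∘ R ∈ K'.payoff ∧ R ∈ Runs (K.congr σ).tree
  rw [Game.mem_runs_congr, h.2, Set.mem_inter_iff]

theorem isGameEmbedding_map {G₁ : Game M} {G₂ : Game M'} (σ : M ≃ M')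
    (htree : ∀ t ∈ G₁.tree, t.map σ ∈ G₂.tree)
    (hpayoff : ∀ R ∈ Runs G₁.tree, R ∈ G₁.payoff ↔ σ ∘ R ∈ G₂.payoff) :
    IsGameEmbedding G₁ G₂ (List.map σ) := by
  refine ⟨⟨htree, fun t _ => List.length_map _, fun t _ k => List.map_take⟩,
    fun t _ s _ h => List.map_injective_iff.mpr σ.injective h, fun R hR S hS => ?_⟩
  obtain rfl : S = σ ∘ R := hS.unique fun n => (runPrefix_map σ R n).symm
  exact hpayoff R hR

theorem Game.isGameEmbedding_congr (σ : M ≃ M') (G : Game M) :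
    IsGameEmbedding G (G.congr σ) (List.map σ) :=
  isGameEmbedding_map σ (fun t ht => by simpa [Game.congr] using ht)
    fun R _ => by simp [Game.congr, ← Function.comp_assoc]

theorem Game.isGameEmbedding_congr_symm (σ : M ≃ M') (G : Game M) :
    IsGameEmbedding (G.congr σ) G (List.map σ.symm) :=
  isGameEmbedding_map σ.symm (fun _ ht => ht) fun _ _ => Iff.rfl

end Transport

section ExtensionProperty

variable {M : Type u} {M' : Type v} {N : Type w}

def HasExtensionProperty (M : Type u) (G : Game N) : Prop :=
  ∀ K K' : Game M, K'.IsFin → K.Sub K' → ∀ e : List M → List N, IsGameEmbedding K G e →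
    ∃ e' : List M → List N, IsGameEmbedding K' G e' ∧ ∀ t ∈ K.tree, e' t = e t

theorem HasExtensionProperty.congr {G : Game N} (hG : HasExtensionProperty M G) (σ : M ≃ M') :
    HasExtensionProperty M' G := by
  intro K K' hK' hKK' e he
  obtain ⟨e', he', he'e⟩ := hG (K.congr σ.symm) (K'.congr σ.symm) (hK'.congr σ.symm)
    (hKK'.congr σ.symm) (e ∘ List.map σ) ((K.isGameEmbedding_congr_symm σ.symm).comp he)
  refine ⟨e' ∘ List.map σ.symm, (K'.isGameEmbedding_congr σ.symm).comp he', fun t ht => ?_⟩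
  simpa using he'e (t.map σ.symm) (by simpa [Game.congr] using ht)

/-- Embed the bigger game, then move the embedding by an automorphism so that it agrees with the
given one on the subgame. -/
theorem hasExtensionProperty_of_ultrahom {M : Type u} {G : Game N}
    (huniv : ∀ H : Game M, H.IsFin → ∃ f, IsGameEmbedding H G f)
    (hult : UltrahomFinGames.{u} G) : HasExtensionProperty M G := by
  intro K K' hK' hKK' e he
  obtain ⟨f, hf⟩ := huniv K' hK'
  obtain ⟨φ, hφ, hφf⟩ := hult M K (hKK'.isFin hK') f e (hf.mono_left hKK') he
  exact ⟨φ ∘ f, hf.comp hφ.1, hφf⟩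

end ExtensionProperty

section BackAndForth

variable {N : Type v} {N' : Type w}

def IsSpanning (G : Game N) (𝓡 : Set (ℕ → N)) : Prop :=
  𝓡 ⊆ Runs G.tree ∧ G.payoff ⊆ 𝓡 ∧ G.tree ⊆ prefixTree 𝓡

theorem exists_countable_isSpanning {G : Game N} (hT : G.tree.Countable)
    (hA : G.payoff.Countable) : ∃ 𝓡, 𝓡.Countable ∧ IsSpanning G 𝓡 := by
  choose r hr hrt using fun t : G.tree => G.isGameTree.exists_run t.2
  have : Countable G.tree := hT.to_subtype
  refine ⟨G.payoff ∪ Set.range r, hA.union (Set.countable_range r),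
    Set.union_subset G.payoff_subset (Set.range_subset_iff.mpr hr), Set.subset_union_left,
    fun t ht => ⟨r ⟨t, ht⟩, Or.inr ⟨_, rfl⟩, _, hrt ⟨t, ht⟩⟩⟩

structure FinEmb (G : Game N) (G' : Game N') where
  runs : Set (ℕ → N)
  finite : runs.Finite
  subset_runs : runs ⊆ Runs G.tree
  toFun : List N → List N'
  isGameEmbedding : IsGameEmbedding (G.subgame runs) G' toFun

namespace FinEmb

variable {G : Game N} {G' : Game N'}

instance : Preorder (FinEmb G G') where
  le p q := p.runs ⊆ q.runs ∧ ∀ t ∈ prefixTree p.runs, q.toFun t = p.toFun t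
  le_refl p := ⟨subset_rfl, fun _ _ => rfl⟩
  le_trans p q r hpq hqr :=
    ⟨hpq.1.trans hqr.1, fun t ht => (hqr.2 t (prefixTree_mono hpq.1 ht)).trans (hpq.2 t ht)⟩

theorem prefixTree_mono {p q : FinEmb G G'} (h : p ≤ q) : prefixTree p.runs ⊆ prefixTree q.runs :=
  FraisseGames.prefixTree_mono h.1

theorem toFun_eq {p q : FinEmb G G'} (h : p ≤ q) {t : List N} (ht : t ∈ prefixTree p.runs) :
    q.toFun t = p.toFun t :=
  h.2 t ht

protected def empty : FinEmb G G' :=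
  ⟨∅, Set.finite_empty, Set.empty_subset _, fun _ => [], isGameEmbedding_subgame_empty G G' _⟩

theorem exists_le_mem_runs (hG' : HasExtensionProperty N G') (p : FinEmb G G') {R : ℕ → N}
    (hR : R ∈ Runs G.tree) : ∃ q : FinEmb G G', p ≤ q ∧ R ∈ q.runs := by
  obtain ⟨f, hf, hfp⟩ := hG' _ _ (G.subgame_isFin (p.finite.insert R))
    (G.subgame_sub_subgame (Set.subset_insert R p.runs)) p.toFun p.isGameEmbedding
  exact ⟨⟨_, p.finite.insert R, Set.insert_subset hR p.subset_runs, f, hf⟩,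
    ⟨Set.subset_insert R p.runs, hfp⟩, Set.mem_insert R p.runs⟩

theorem exists_inverse (p : FinEmb G G') :
    ∃ q : FinEmb G' G, q.runs = runImage p.toFun p.runs ∧
      (∀ t ∈ prefixTree p.runs, q.toFun (p.toFun t) = t) ∧
      ∀ s ∈ prefixTree q.runs, p.toFun (q.toFun s) = s := by
  obtain ⟨ψ, hψ, hψp, hpψ⟩ := p.isGameEmbedding.exists_inverse
  have hruns : Runs (G.subgame p.runs).tree = p.runs := runs_prefixTree p.finite
  rw [hruns] at hψ hpψ
  exact ⟨⟨_, runImage_finite _ p.finite,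
    runImage_subset_runs p.isGameEmbedding.1 (subset_runs_prefixTree p.runs), ψ,
    hψ.mono_right (G.subgame_sub p.subset_runs)⟩, rfl, hψp, hpψ⟩

/-- The backward step: invert `p`, extend the inverse to reach `S`, and invert back. -/
theorem exists_le_barMapsTo (hG : HasExtensionProperty N' G) (p : FinEmb G G') {S : ℕ → N'}
    (hS : S ∈ Runs G'.tree) : ∃ q : FinEmb G G', p ≤ q ∧ ∃ R ∈ q.runs, BarMapsTo q.toFun R S := by
  obtain ⟨p', hp'runs, hp'p, -⟩ := p.exists_inverse
  obtain ⟨q', hpq', hSq'⟩ := p'.exists_le_mem_runs hG hS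
  obtain ⟨q, hqruns, hqq', -⟩ := q'.exists_inverse
  have hpt : ∀ t ∈ prefixTree p.runs, p.toFun t ∈ prefixTree p'.runs := fun t ht => by
    rw [hp'runs, prefixTree_runImage p.isGameEmbedding.1]
    exact ⟨t, ht, rfl⟩
  have hq'p : ∀ t ∈ prefixTree p.runs, q'.toFun (p.toFun t) = t := fun t ht => by
    rw [toFun_eq hpq' (hpt t ht), hp'p t ht]
  refine ⟨q, ⟨fun R hR => ?_, fun t ht => ?_⟩, ?_⟩
  · obtain ⟨S₀, hS₀⟩ := p.isGameEmbedding.1.exists_barMapsTo (subset_runs_prefixTree _ hR)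
    have hS₀' : S₀ ∈ q'.runs := hpq'.1 (hp'runs ▸ ⟨R, hR, hS₀⟩)
    rw [hqruns]
    exact ⟨S₀, hS₀', fun n => by rw [hS₀ n, hq'p _ (runPrefix_mem_prefixTree hR n)]⟩
  · conv_lhs => rw [← hq'p t ht]
    exact hqq' _ (prefixTree_mono hpq' (hpt t ht))
  · obtain ⟨R, hR⟩ := q'.isGameEmbedding.1.exists_barMapsTo (subset_runs_prefixTree _ hSq')
    refine ⟨R, hqruns ▸ ⟨S, hSq', hR⟩, fun n => ?_⟩
    rw [hR n, hqq' _ (runPrefix_mem_prefixTree hSq' n)]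

open Classical in
/-- The union of a chain of finite partial embeddings. -/
noncomputable def limit (Q : ℕ → FinEmb G G') (t : List N) : List N' :=
  if h : ∃ n, t ∈ prefixTree (Q n).runs then (Q (Nat.find h)).toFun t else []

theorem limit_eq {Q : ℕ → FinEmb G G'} (hQ : Monotone Q) {n : ℕ} {t : List N}
    (ht : t ∈ prefixTree (Q n).runs) : limit Q t = (Q n).toFun t := by
  classical
  have h : ∃ n, t ∈ prefixTree (Q n).runs := ⟨n, ht⟩
  rw [limit, dif_pos h, toFun_eq (hQ (Nat.find_min' h ht)) (Nat.find_spec h)]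

theorem limit_injOn {Q : ℕ → FinEmb G G'} (hQ : Monotone Q)
    (hdom : G.tree ⊆ ⋃ n, prefixTree (Q n).runs) : G.tree.InjOn (limit Q) := by
  intro t ht s hs h
  obtain ⟨m, hm⟩ := Set.mem_iUnion.mp (hdom ht)
  obtain ⟨n, hn⟩ := Set.mem_iUnion.mp (hdom hs)
  have htk := prefixTree_mono (hQ (le_max_left m n)) hm
  have hsk := prefixTree_mono (hQ (le_max_right m n)) hn
  rw [limit_eq hQ htk, limit_eq hQ hsk] at h
  exact (Q (max m n)).isGameEmbedding.2.1 t htk s hsk h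

theorem chronological_limit {Q : ℕ → FinEmb G G'} (hQ : Monotone Q)
    (hdom : G.tree ⊆ ⋃ n, prefixTree (Q n).runs) : Chronological G.tree G'.tree (limit Q) := by
  refine ⟨fun t ht => ?_, fun t ht => ?_, fun t ht k => ?_⟩ <;>
    obtain ⟨n, hn⟩ := Set.mem_iUnion.mp (hdom ht) <;> have hc := (Q n).isGameEmbedding.1
  · exact limit_eq hQ hn ▸ hc.1 t hn
  · exact limit_eq hQ hn ▸ hc.2.1 t hn
  · rw [limit_eq hQ hn, limit_eq hQ ((isGameTree_prefixTree _).1 t hn k), hc.2.2 t hn]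

theorem isGameIso_limit {Q : ℕ → FinEmb G G'} (hQ : Monotone Q) {𝓡 : Set (ℕ → N)}
    {𝓢 : Set (ℕ → N')} (h𝓡 : IsSpanning G 𝓡) (h𝓢 : IsSpanning G' 𝓢)
    (hdom : ∀ R ∈ 𝓡, ∃ n, R ∈ (Q n).runs)
    (hcod : ∀ S ∈ 𝓢, ∃ n, ∃ R ∈ (Q n).runs, BarMapsTo (Q n).toFun R S) :
    IsGameIso G G' (limit Q) := by
  have hdomT : G.tree ⊆ ⋃ n, prefixTree (Q n).runs := by
    intro t ht
    obtain ⟨R, hR, k, rfl⟩ := h𝓡.2.2 ht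
    obtain ⟨n, hn⟩ := hdom R hR
    exact Set.mem_iUnion.mpr ⟨n, runPrefix_mem_prefixTree hn k⟩
  have hinj := limit_injOn hQ hdomT
  refine ⟨⟨chronological_limit hQ hdomT, hinj, fun R hR S hS => ⟨fun hRA => ?_, fun hSA => ?_⟩⟩,
    fun s hs => ?_⟩
  · obtain ⟨n, hn⟩ := hdom R (h𝓡.2.1 hRA)
    have hRn := subset_runs_prefixTree _ hn
    refine ((Q n).isGameEmbedding.2.2 R hRn S fun k => ?_).mp ⟨hRA, hRn⟩
    rw [hS k, limit_eq hQ (hRn k)]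
  · obtain ⟨n, R', hR', hR'S⟩ := hcod S (h𝓢.2.1 hSA)
    have hR'n := subset_runs_prefixTree _ hR'
    have hR'S' : BarMapsTo (limit Q) R' S := fun k => by rw [hR'S k, limit_eq hQ (hR'n k)]
    obtain rfl : R = R' := eq_of_barMapsTo hinj hR ((Q n).subset_runs hR') hS hR'S'
    exact ((Q n).isGameEmbedding.2.2 R hR'n S hR'S).mpr hSA |>.1
  · obtain ⟨S, hS, k, rfl⟩ := h𝓢.2.2 hs
    obtain ⟨n, R, hR, hRS⟩ := hcod S hS
    refine ⟨runPrefix R k, (Q n).subset_runs hR k, ?_⟩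
    rw [hRS k, limit_eq hQ (runPrefix_mem_prefixTree hR k)]

/-- The task of one stage of the back-and-forth. -/
def Meets (q : FinEmb G G') : Option ((ℕ → N) ⊕ (ℕ → N')) → Prop
  | none => True
  | some (.inl R) => R ∈ q.runs
  | some (.inr S) => ∃ R ∈ q.runs, BarMapsTo q.toFun R S

theorem exists_isGameIso (hG : HasExtensionProperty N' G) (hG' : HasExtensionProperty N G')
    (hT : G.tree.Countable) (hA : G.payoff.Countable) (hT' : G'.tree.Countable)
    (hA' : G'.payoff.Countable) (p : FinEmb G G') :
    ∃ φ, IsGameIso G G' φ ∧ ∀ t ∈ prefixTree p.runs, φ t = p.toFun t := by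
  obtain ⟨𝓡, h𝓡c, h𝓡⟩ := exists_countable_isSpanning hT hA
  obtain ⟨𝓢, h𝓢c, h𝓢⟩ := exists_countable_isSpanning hT' hA'
  obtain ⟨τ, hτ⟩ := (((h𝓡c.image (some ∘ Sum.inl)).union
    (h𝓢c.image (some ∘ Sum.inr))).insert none).exists_eq_range (Set.insert_nonempty _ _)
  have hstep : ∀ n (q : FinEmb G G'), ∃ q', q ≤ q' ∧ q'.Meets (τ n) := by
    intro n q
    obtain h | ⟨R, hR, h⟩ | ⟨S, hS, h⟩ := hτ ▸ Set.mem_range_self n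
    · exact ⟨q, le_rfl, by rw [h]; trivial⟩
    · rw [← h]
      exact q.exists_le_mem_runs hG' (h𝓡.1 hR)
    · rw [← h]
      exact q.exists_le_barMapsTo hG (h𝓢.1 hS)
  choose next hnext using hstep
  let Q : ℕ → FinEmb G G' := fun n => Nat.rec p next n
  have hQ : Monotone Q := monotone_nat_of_le_succ fun n => (hnext n (Q n)).1
  have hmeets : ∀ x ∈ Set.range τ, ∃ n, (Q n).Meets x := by
    rintro _ ⟨n, rfl⟩
    exact ⟨n + 1, (hnext n (Q n)).2⟩
  refine ⟨limit Q, isGameIso_limit hQ h𝓡 h𝓢 (fun R hR => ?_) (fun S hS => ?_),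
    fun t ht => limit_eq hQ (n := 0) ht⟩
  · exact hmeets _ (by rw [← hτ]; exact Or.inr (Or.inl ⟨R, hR, rfl⟩))
  · exact hmeets _ (by rw [← hτ]; exact Or.inr (Or.inr ⟨S, hS, rfl⟩))

end FinEmb

end BackAndForth

section LevelMap

variable {M : Type u} {N : Type v}

/-- The chronological map that relabels the move `x` played at position `a` as `c a x`. -/
def levelMap (c : List M → M → N) : List M → List N
  | [] => []
  | x :: t => c [] x :: levelMap (fun s => c (x :: s)) t

theorem levelMap_append_singleton (c : List M → M → N) (t : List M) (x : M) :
    levelMap c (t ++ [x]) = levelMap c t ++ [c t x] := by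
  induction t generalizing c with
  | nil => rfl
  | cons y t ih => simp [levelMap, ih]

theorem length_levelMap (c : List M → M → N) (t : List M) : (levelMap c t).length = t.length := by
  induction t generalizing c with
  | nil => rfl
  | cons y t ih => simp [levelMap, ih]

theorem levelMap_take (c : List M → M → N) (t : List M) (k : ℕ) :
    levelMap c (t.take k) = (levelMap c t).take k := by
  induction t generalizing c k with
  | nil => simp [levelMap]
  | cons y t ih => cases k <;> simp [levelMap, ih]

theorem chronological_levelMap (T : Set (List M)) (c : List M → M → N) :
    Chronological T Set.univ (levelMap c) :=
  ⟨fun _ _ => trivial, fun t _ => length_levelMap c t, fun t _ k => levelMap_take c t k⟩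

theorem barMapsTo_levelMap (c : List M → M → N) (R : ℕ → M) :
    BarMapsTo (levelMap c) R fun n => c (runPrefix R n) (R n) := by
  intro n
  induction n with
  | zero => rfl
  | succ n ih => rw [runPrefix_succ, runPrefix_succ, levelMap_append_singleton, ih]

theorem levelMap_injOn {T : Set (List M)} (hT : ∀ t ∈ T, ∀ k, t.take k ∈ T)
    {c : List M → M → N} (hc : ∀ a x y, a ++ [x] ∈ T → a ++ [y] ∈ T → c a x = c a y → x = y) :
    T.InjOn (levelMap c) := by
  intro t ht s hs h
  induction t using List.reverseRecOn generalizing s with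
  | nil =>
    exact (List.length_eq_zero_iff.mp
      (by simpa [levelMap, length_levelMap] using (congrArg List.length h).symm)).symm
  | append_singleton t x ih =>
    obtain rfl | ⟨s, y, rfl⟩ := s.eq_nil_or_concat'
    · simpa [levelMap, length_levelMap] using congrArg List.length h
    rw [levelMap_append_singleton, levelMap_append_singleton] at h
    obtain ⟨h₁, h₂⟩ := List.append_inj' h rfl
    have hts : t = s :=
      ih (by simpa using hT _ ht t.length) (by simpa using hT _ hs s.length) h₁
    subst hts
    rw [hc t x y ht hs (List.singleton_inj.mp h₂)]

theorem levelMap_eq {T : Set (List M)} (hT : ∀ t ∈ T, ∀ k, t.take k ∈ T) {T' : Set (List N)}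
    {e : List M → List N} (he : Chronological T T' e) {c : List M → M → N}
    (hc : ∀ a x, a ++ [x] ∈ T → e (a ++ [x]) = e a ++ [c a x]) : ∀ t ∈ T, levelMap c t = e t := by
  intro t ht
  induction t using List.reverseRecOn with
  | nil => exact (List.length_eq_zero_iff.mp (he.2.1 [] ht)).symm
  | append_singleton t x ih =>
    rw [levelMap_append_singleton, ih (by simpa using hT _ ht t.length), hc t x ht]

end LevelMap

section GFL

theorem mem_c00_iff {S : ℕ → ℕ} : S ∈ c00 ↔ ∀ᶠ n in atTop, S n = 0 := by
  simp [c00, eventually_atTop]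

theorem mem_c00_iff_of_eventually {S : ℕ → ℕ} {P : Prop} (h : ∀ᶠ n in atTop, (S n = 0 ↔ P)) :
    S ∈ c00 ↔ P := by
  rw [mem_c00_iff]
  by_cases hP : P
  · simpa [hP] using h
  · simp only [hP, iff_false] at h ⊢
    exact fun h' => (h.and h').exists.elim fun _ hn => hn.1 hn.2

theorem c00_countable : c00.Countable := by
  refine (Set.countable_range fun l : List ℕ => fun n => l.getD n 0).mono ?_
  rintro R ⟨N, hN⟩
  refine ⟨runPrefix R N, funext fun n => ?_⟩
  rcases lt_or_ge n N with h | h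
  · simp [runPrefix, List.getD_eq_getElem?_getD, h]
  · simp [runPrefix, List.getD_eq_getElem?_getD, h, hN n h]

theorem GFL_hasExtensionProperty (M : Type u) : HasExtensionProperty M GFL := by
  classical
  intro K K' hK' hKK' e he
  obtain ⟨L, hL⟩ := (eventually_injOn_runPrefix hK').exists
  obtain ⟨J, hJ⟩ := Set.countable_iff_exists_injOn.mp hK'.countable_tree
  obtain ⟨B, hB⟩ := (hKK'.isFin hK').exists_bound fun b => (e b).getLastD 0
  -- Labels above `B a` keep new moves apart from those of `K`. Past level `L` a position has a
  -- single move, so labelling the moves along won runs `0` is harmless, and it makes exactly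
  -- the won runs eventually zero.
  let c : List M → M → ℕ := fun a x =>
    if a ++ [x] ∈ K.tree then (e (a ++ [x])).getLastD 0
    else if L ≤ a.length ∧ a ++ [x] ∈ prefixTree K'.payoff then 0 else B a + J (a ++ [x]) + 1
  have hce : ∀ t ∈ K.tree, levelMap c t = e t := levelMap_eq K.isGameTree.1 he.1 fun a x hx => by
    obtain ⟨y, hy⟩ := he.1.exists_append_singleton hx
    simp [c, hx, hy]
  have hinj : K'.tree.InjOn (levelMap c) := levelMap_injOn K'.isGameTree.1 fun a x y hx hy hxy => by
    rcases le_or_gt L a.length with ha | ha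
    · exact K'.eq_of_append_singleton_mem hL ha hx hy
    have hsmall : ¬ L ≤ a.length := by omega
    by_cases hxK : a ++ [x] ∈ K.tree <;> by_cases hyK : a ++ [y] ∈ K.tree <;>
      simp only [c, hxK, hyK, hsmall, false_and, if_true, if_false] at hxy
    · obtain ⟨u, hu⟩ := he.1.exists_append_singleton hxK
      obtain ⟨w, hw⟩ := he.1.exists_append_singleton hyK
      rw [hu, hw] at hxy
      simpa using he.2.1 _ hxK _ hyK (by rw [hu, hw]; simpa using hxy)
    · have := hB a x hxK; omega
    · have := hB a y hyK; omega
    · simpa using hJ hx hy (by omega)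
  refine ⟨levelMap c, ⟨chronological_levelMap _ c, hinj, fun R hR S hS => ?_⟩, hce⟩
  obtain rfl := (barMapsTo_levelMap c R).unique hS
  by_cases hRK : R ∈ Runs K.tree
  · have := he.2.2 R hRK _ fun n => by rw [barMapsTo_levelMap c R n, hce _ (hRK n)]
    rw [← this, hKK'.2, Set.mem_inter_iff, and_iff_left hRK]
  refine (mem_c00_iff_of_eventually ?_).symm
  filter_upwards [eventually_ge_atTop L,
    (tendsto_add_atTop_nat 1).eventually (eventually_runPrefix_notMem K.isGameTree.1 hRK)]
    with n hn hnK
  have hpay := runPrefix_mem_prefixTree_iff hL (show L ≤ n + 1 by omega) K'.payoff_subset hR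
  rw [runPrefix_succ] at hpay hnK
  simp only [c, hnK, hpay, runPrefix_length, if_false]
  split_ifs with h
  · simpa using h.2
  · simp only [false_iff]
    exact fun hRA => h ⟨by omega, hRA⟩

theorem GFL_universal {M : Type u} (H : Game M) (hH : H.IsFin) :
    ∃ f : List M → List ℕ, IsGameEmbedding H GFL f := by
  obtain ⟨f, hf, -⟩ := GFL_hasExtensionProperty M _ H hH (H.subgame_sub (Set.empty_subset _))
    (fun _ => []) (isGameEmbedding_subgame_empty H GFL _)
  exact ⟨f, hf⟩

theorem GFL_ultrahom : UltrahomFinGames.{u, 0} GFL := by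
  intro M H hH f g hf hg
  obtain ⟨ψ, hψ, hψf, -⟩ := hf.exists_inverse
  let p : FinEmb GFL GFL := ⟨_, runImage_finite f hH, fun _ _ _ => trivial, g ∘ ψ, hψ.comp hg⟩
  obtain ⟨φ, hφ, hφp⟩ := p.exists_isGameIso (GFL_hasExtensionProperty ℕ)
    (GFL_hasExtensionProperty ℕ) Set.countable_univ c00_countable Set.countable_univ c00_countable
  refine ⟨φ, hφ, fun t ht => ?_⟩
  have hft : f t ∈ prefixTree p.runs := by
    rw [prefixTree_runImage (H.isGameTree.eq_prefixTree_runs ▸ hf.1),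
      ← H.isGameTree.eq_prefixTree_runs]
    exact ⟨t, ht, rfl⟩
  exact (hφp _ hft).trans (congrArg g (hψf t ht))

end GFL

/-- `G_FL` is the unique (up to isomorphism) countable game containing
a copy of every finite game which is ultrahomogeneous w.r.t. `(emb, FinGame)`. -/
theorem GFL_unique_countable_universal_ultrahomogeneous :
    (GFL.tree.Countable ∧ GFL.payoff.Countable ∧
      (∀ (M : Type u) (H : Game M), H.IsFin →
        ∃ f : List M → List ℕ, IsGameEmbedding H GFL f) ∧
      UltrahomFinGames.{u, 0} GFL) ∧
    ∀ (N : Type v) (G : Game N),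
      G.tree.Countable → G.payoff.Countable →
      (∀ (M : Type u) (H : Game M), H.IsFin →
        ∃ f : List M → List N, IsGameEmbedding H G f) →
      UltrahomFinGames.{u, v} G →
      ∃ φ : List N → List ℕ, IsGameIso G GFL φ := by
  refine ⟨⟨Set.countable_univ, c00_countable, fun M => GFL_universal, GFL_ultrahom⟩, ?_⟩
  intro N G hT hA huniv hult
  have hG : HasExtensionProperty ℕ G :=
    (hasExtensionProperty_of_ultrahom (huniv (ULift ℕ)) hult).congr Equiv.ulift
  obtain ⟨φ, hφ, -⟩ := (FinEmb.empty : FinEmb G GFL).exists_isGameIso hG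
    (GFL_hasExtensionProperty N) hT hA Set.countable_univ c00_countable
  exact ⟨φ, hφ⟩

end FraisseGames
end

section
/- Let F be a full subcategory of C such that every object of F is weakly finitely small in C with respect to sequences in F (i.e., weakly finitely small with respect to (Mor C, F)). If X is an object of C that is the colimit in C of some functor S : ω → F, then the comma category (F/X)_C has the joint embedding property: for all morphisms f : A → X and g : B → X of C with A and B objects of F, there exist an object D of F and morphisms u : A → D, v : B → D, h : D → X in C such that h ∘ u = f and h ∘ v = g. -/
open CategoryTheory CategoryTheory.Limits

universe u v

/-- if every object of the full subcategory `F` (given by the predicate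
`P`) is weakly finitely small in `C` with respect to sequences in `F`, and `X` is the
colimit in `C` of a sequence in `F`, then the comma category `(F/X)_C` has the joint
embedding property. -/
theorem comma_jep_of_weakly_finitely_small
    {C : Type u} [Category.{v} C] (P : C → Prop)
    -- every object of `F` is weakly finitely small w.r.t. `(Mor C, F)`
    (hwfs : ∀ A : C, P A →
      ∀ S : ℕ ⥤ C, (∀ n, P (S.obj n)) →
        ∀ c : Cocone S, IsColimit c →
          ∀ f : A ⟶ c.pt, ∃ (n : ℕ) (f' : A ⟶ S.obj n), f' ≫ c.ι.app n = f)
    -- `X = c.pt` is the colimit in `C` of a sequence in `F`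
    (S : ℕ ⥤ C) (hS : ∀ n, P (S.obj n)) (c : Cocone S) (hc : IsColimit c) :
    -- the JEP for `(F/X)_C`
    ∀ A B : C, P A → P B → ∀ (f : A ⟶ c.pt) (g : B ⟶ c.pt),
      ∃ D : C, P D ∧ ∃ (u : A ⟶ D) (v : B ⟶ D) (h : D ⟶ c.pt),
        u ≫ h = f ∧ v ≫ h = g := by
  intro A B hA hB f g
  obtain ⟨n, f', hf⟩ := hwfs A hA S hS c hc f
  obtain ⟨m, g', hg⟩ := hwfs B hB S hS c hc g
  refine ⟨S.obj (max n m), hS _, f' ≫ S.map (homOfLE (le_max_left n m)),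
    g' ≫ S.map (homOfLE (le_max_right n m)), c.ι.app (max n m), ?_, ?_⟩
  · rw [Category.assoc, c.w (homOfLE (le_max_left n m)), hf]
  · rw [Category.assoc, c.w (homOfLE (le_max_right n m)), hg]
end

section
/- Let R, S : ω → F_M be functors with colimit cocones (rₙ : R(n) → X)_{n∈ℕ} and (sₙ : S(n) → X)_{n∈ℕ} in C whose components lie in M. If there is a back-and-forth between R and S along a strictly increasing φ : ℕ → ℕ, given by morphisms (θₖ)ₖ and (ηₖ)ₖ, then there is an isomorphism f : X → X in C such that f ∘ r_{φ(2k)} = s_{φ(2k+1)} ∘ θₖ for all k and f⁻¹ ∘ s_{φ(2k+1)} = r_{φ(2k+2)} ∘ ηₖ for all k. -/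
open CategoryTheory CategoryTheory.Limits

universe u v

/-- The cocone over a sequence `R : ℕ ⥤ C` determined by a compatible family of
morphisms `r n : R(n) ⟶ X`. -/
def mkNatCocone {C : Type u} [Category.{v} C] (R : ℕ ⥤ C) (X : C)
    (r : ∀ n, R.obj n ⟶ X)
    (hr : ∀ (n m : ℕ) (h : n ≤ m), R.map (homOfLE h) ≫ r m = r n) : Cocone R where
  pt := X
  ι :=
    { app := r
      naturality := by
        intro n m f
        have h : n ≤ m := leOfHom f
        have hf : f = homOfLE h := rfl
        rw [hf]
        simp [hr n m h] }

/-- a back-and-forth between two sequences in `F_M` with colimit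
cocones (with components in `M`) into the same object `X` induces an isomorphism
`X ≅ X` commuting with the cocones and the back-and-forth. -/
theorem back_and_forth_induces_iso
    {C : Type u} [Category.{v} C] (P : C → Prop) (M : MorphismProperty C)
    (hMid : ∀ Y : C, P Y → M (𝟙 Y))
    (hMcomp : ∀ {X' Y Z : C} (f : X' ⟶ Y) (g : Y ⟶ Z), M f → M g → M (f ≫ g))
    (R S : ℕ ⥤ C)
    (hRP : ∀ n, P (R.obj n)) (hRM : ∀ (n m : ℕ) (h : n ≤ m), M (R.map (homOfLE h)))
    (hSP : ∀ n, P (S.obj n)) (hSM : ∀ (n m : ℕ) (h : n ≤ m), M (S.map (homOfLE h)))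
    (X : C)
    (r : ∀ n, R.obj n ⟶ X)
    (hr : ∀ (n m : ℕ) (h : n ≤ m), R.map (homOfLE h) ≫ r m = r n)
    (hrM : ∀ n, M (r n))
    (hrcolim : Nonempty (IsColimit (mkNatCocone R X r hr)))
    (s : ∀ n, S.obj n ⟶ X)
    (hs : ∀ (n m : ℕ) (h : n ≤ m), S.map (homOfLE h) ≫ s m = s n)
    (hsM : ∀ n, M (s n))
    (hscolim : Nonempty (IsColimit (mkNatCocone S X s hs)))
    -- a back-and-forth between `R` and `S` along `φ`
    (φ : ℕ → ℕ) (hφ : StrictMono φ)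
    (θ : ∀ k, R.obj (φ (2 * k)) ⟶ S.obj (φ (2 * k + 1)))
    (η : ∀ k, S.obj (φ (2 * k + 1)) ⟶ R.obj (φ (2 * k + 2)))
    (hθη : ∀ k, θ k ≫ η k =
      R.map (homOfLE (hφ.monotone (by omega : 2 * k ≤ 2 * k + 2))))
    (hηθ : ∀ k, η k ≫ θ (k + 1) =
      S.map (homOfLE (hφ.monotone (by omega : 2 * k + 1 ≤ 2 * (k + 1) + 1)))) :
    ∃ f : X ≅ X,
      (∀ k, r (φ (2 * k)) ≫ f.hom = θ k ≫ s (φ (2 * k + 1))) ∧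
      ∀ k, s (φ (2 * k + 1)) ≫ f.inv = η k ≫ r (φ (2 * k + 2)) := by
  obtain ⟨hR⟩ := hrcolim
  obtain ⟨hS⟩ := hscolim
  have hn : ∀ n : ℕ, n ≤ φ (2 * n) := fun n => le_trans (by omega) hφ.le_apply
  have hm : ∀ n : ℕ, n ≤ φ (2 * n + 1) := fun n => le_trans (by omega) hφ.le_apply
  -- step lemmas
  have stepA : ∀ (k : ℕ) (h : φ (2 * k) ≤ φ (2 * (k + 1))),
      R.map (homOfLE h) ≫ θ (k + 1) ≫ s (φ (2 * (k + 1) + 1)) = θ k ≫ s (φ (2 * k + 1)) := by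
    intro k h
    have e : R.map (homOfLE h) = θ k ≫ η k := (hθη k).symm
    rw [e, Category.assoc, ← Category.assoc (η k), hηθ k, hs]
  have stepB : ∀ (k : ℕ) (h : φ (2 * k + 1) ≤ φ (2 * (k + 1) + 1)),
      S.map (homOfLE h) ≫ η (k + 1) ≫ r (φ (2 * (k + 1) + 2)) = η k ≫ r (φ (2 * k + 2)) := by
    intro k h
    have e : S.map (homOfLE h) = η k ≫ θ (k + 1) := (hηθ k).symm
    rw [e, Category.assoc, ← Category.assoc (θ (k + 1)), hθη (k + 1), hr]
    rfl
  -- key lemmas by induction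
  have keyA : ∀ (k' k : ℕ), k ≤ k' → ∀ (h : φ (2 * k) ≤ φ (2 * k')),
      R.map (homOfLE h) ≫ θ k' ≫ s (φ (2 * k' + 1)) = θ k ≫ s (φ (2 * k + 1)) := by
    intro k'
    induction k' with
    | zero =>
      intro k hk h
      have hk0 : k = 0 := by omega
      subst hk0
      have : homOfLE h = 𝟙 (φ (2 * 0) : ℕ) := rfl
      rw [this, R.map_id, Category.id_comp]
    | succ n ih =>
      intro k hk h
      by_cases hk' : k ≤ n
      · have h1 : φ (2 * k) ≤ φ (2 * n) := hφ.monotone (by omega)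
        have h2 : φ (2 * n) ≤ φ (2 * (n + 1)) := hφ.monotone (by omega)
        have e : R.map (homOfLE h) = R.map (homOfLE h1) ≫ R.map (homOfLE h2) := by
          rw [← Functor.map_comp, homOfLE_comp]
        rw [e, Category.assoc, stepA n h2, ih k hk' h1]
      · have hk1 : k = n + 1 := by omega
        subst hk1
        have : homOfLE h = 𝟙 (φ (2 * (n + 1)) : ℕ) := rfl
        rw [this, R.map_id, Category.id_comp]
  have keyB : ∀ (k' k : ℕ), k ≤ k' → ∀ (h : φ (2 * k + 1) ≤ φ (2 * k' + 1)),
      S.map (homOfLE h) ≫ η k' ≫ r (φ (2 * k' + 2)) = η k ≫ r (φ (2 * k + 2)) := by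
    intro k'
    induction k' with
    | zero =>
      intro k hk h
      have hk0 : k = 0 := by omega
      subst hk0
      have : homOfLE h = 𝟙 (φ (2 * 0 + 1) : ℕ) := rfl
      rw [this, S.map_id, Category.id_comp]
    | succ n ih =>
      intro k hk h
      by_cases hk' : k ≤ n
      · have h1 : φ (2 * k + 1) ≤ φ (2 * n + 1) := hφ.monotone (by omega)
        have h2 : φ (2 * n + 1) ≤ φ (2 * (n + 1) + 1) := hφ.monotone (by omega)
        have e : S.map (homOfLE h) = S.map (homOfLE h1) ≫ S.map (homOfLE h2) := by
          rw [← Functor.map_comp, homOfLE_comp]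
        rw [e, Category.assoc, stepB n h2, ih k hk' h1]
      · have hk1 : k = n + 1 := by omega
        subst hk1
        have : homOfLE h = 𝟙 (φ (2 * (n + 1) + 1) : ℕ) := rfl
        rw [this, S.map_id, Category.id_comp]
  -- compatible families
  have ht : ∀ (n m : ℕ) (h : n ≤ m),
      R.map (homOfLE h) ≫ (R.map (homOfLE (hn m)) ≫ θ m ≫ s (φ (2 * m + 1))) =
        R.map (homOfLE (hn n)) ≫ θ n ≫ s (φ (2 * n + 1)) := by
    intro n m h
    have h2 : φ (2 * n) ≤ φ (2 * m) := hφ.monotone (by omega)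
    have e : R.map (homOfLE h) ≫ R.map (homOfLE (hn m)) =
        R.map (homOfLE (hn n)) ≫ R.map (homOfLE h2) := by
      rw [← Functor.map_comp, ← Functor.map_comp, homOfLE_comp, homOfLE_comp]
    rw [← Category.assoc, e, Category.assoc, keyA m n (by omega) h2]
  have hu : ∀ (n m : ℕ) (h : n ≤ m),
      S.map (homOfLE h) ≫ (S.map (homOfLE (hm m)) ≫ η m ≫ r (φ (2 * m + 2))) =
        S.map (homOfLE (hm n)) ≫ η n ≫ r (φ (2 * n + 2)) := by
    intro n m h
    have h2 : φ (2 * n + 1) ≤ φ (2 * m + 1) := hφ.monotone (by omega)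
    have e : S.map (homOfLE h) ≫ S.map (homOfLE (hm m)) =
        S.map (homOfLE (hm n)) ≫ S.map (homOfLE h2) := by
      rw [← Functor.map_comp, ← Functor.map_comp, homOfLE_comp, homOfLE_comp]
    rw [← Category.assoc, e, Category.assoc, keyB m n (by omega) h2]
  -- define the maps
  set f0 : X ⟶ X := hR.desc (mkNatCocone R X
    (fun n => R.map (homOfLE (hn n)) ≫ θ n ≫ s (φ (2 * n + 1))) ht) with hf0
  set g0 : X ⟶ X := hS.desc (mkNatCocone S X
    (fun n => S.map (homOfLE (hm n)) ≫ η n ≫ r (φ (2 * n + 2))) hu) with hg0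
  have facR : ∀ n, r n ≫ f0 = R.map (homOfLE (hn n)) ≫ θ n ≫ s (φ (2 * n + 1)) :=
    fun n => hR.fac _ n
  have facS : ∀ n, s n ≫ g0 = S.map (homOfLE (hm n)) ≫ η n ≫ r (φ (2 * n + 2)) :=
    fun n => hS.fac _ n
  have hfθ : ∀ k, r (φ (2 * k)) ≫ f0 = θ k ≫ s (φ (2 * k + 1)) := by
    intro k
    rw [facR]
    exact keyA (φ (2 * k)) k (le_trans (by omega) hφ.le_apply) (hn (φ (2 * k)))
  have hgη : ∀ k, s (φ (2 * k + 1)) ≫ g0 = η k ≫ r (φ (2 * k + 2)) := by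
    intro k
    rw [facS]
    exact keyB (φ (2 * k + 1)) k (le_trans (by omega) hφ.le_apply) (hm (φ (2 * k + 1)))
  have hfg : f0 ≫ g0 = 𝟙 X := by
    apply hR.hom_ext
    intro n
    show r n ≫ f0 ≫ g0 = r n ≫ 𝟙 X
    rw [Category.comp_id, ← Category.assoc, facR n, Category.assoc, Category.assoc,
      hgη n, ← Category.assoc (θ n), hθη n, hr, hr]
  have hgf : g0 ≫ f0 = 𝟙 X := by
    apply hS.hom_ext
    intro n
    show s n ≫ g0 ≫ f0 = s n ≫ 𝟙 X
    have hfθ' : r (φ (2 * n + 2)) ≫ f0 = θ (n + 1) ≫ s (φ (2 * (n + 1) + 1)) := hfθ (n + 1)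
    rw [Category.comp_id, ← Category.assoc, facS n, Category.assoc, Category.assoc,
      hfθ', ← Category.assoc (η n), hηθ n, hs, hs]
  exact ⟨⟨f0, g0, hfg, hgf⟩, hfθ, hgη⟩
end
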